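/- arXiv:2101.04845 — 3 statements merged into one kernel-verified Lean document; each statement's English description precedes it below -/
import Mathlib

section
/- Let $k \geq 1$, and for each $T \subseteq [k]$ and $s \in [k]$ let $u_{T,s}$ be elements of a field $F$, with $u_{T,s} = 0$ whenever $s \notin T$, and $u_{T,s} \neq 0$ for $s \in T$. Define $p_{S,T} = \prod_{t\in T} u_{S,t}$ for $T \subseteq S$ and $U_{S,T} = \frac{1}{p_{T,T}} \sum_{\mathcal{C}} (-1)^r \prod_{i=1}^r \frac{1}{p_{C_i, C_i \setminus C_{i-1}}}$, summing over all chains $T = C_0 \subsetneq \cdots \subsetneq C_r = S$. Then for every $T \subsetneq [k]$, $\sum_{S : T \subseteq S \subseteq [k]} p_{[k],S}\, U_{S,T} = 0$, and for $T = [k]$ the sum equals $1$. -/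
open Classical

/-- `p_{S,T} = ∏_{t ∈ T} u_{S,t}`. -/
noncomputable def pprod {F : Type*} [Field F] {k : ℕ}
    (u : Finset (Fin k) → Fin k → F) (S T : Finset (Fin k)) : F :=
  ∏ t ∈ T, u S t

/-- `U_{S,T} = p_{T,T}⁻¹ ∑_chains (-1)^r ∏_{i=1}^r p_{C_i, C_i \ C_{i-1}}⁻¹`, the sum
ranging over all chains `T = C₀ ⊊ C₁ ⊊ ⋯ ⊊ C_r = S` (all of which have `r ≤ k`). -/
noncomputable def Uchain {F : Type*} [Field F] {k : ℕ}
    (u : Finset (Fin k) → Fin k → F) (S T : Finset (Fin k)) : F :=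
  (pprod u T T)⁻¹ *
    ∑ r ∈ Finset.range (k + 1),
      ∑ C : Fin (r + 1) → Finset (Fin k),
        if StrictMono C ∧ C 0 = T ∧ C (Fin.last r) = S then
          (-1 : F) ^ r *
            ∏ i : Fin r, (pprod u (C i.succ) (C i.succ \ C i.castSucc))⁻¹
        else 0

/-! Expanding `U_{S,T}`, the sum becomes `p_{T,T}⁻¹` times a sum over all strict chains `C`
starting at `T` of `p_{[k],top C}` times the signed weight of `C`. Appending `[k]` to a chain
whose top `S` is not `[k]` multiplies its weight by `-p_{[k],[k]∖S}⁻¹`, and since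
`p_{[k],[k]} = p_{[k],S} p_{[k],[k]∖S}` this negates its term. These pairs cancel, leaving only
the trivial chain when `T = [k]`. -/

open Finset

lemma StrictMono.finSnoc {α : Type*} [Preorder α] {n : ℕ} {f : Fin (n + 1) → α} {a : α}
    (hf : StrictMono f) (ha : f (Fin.last n) < a) :
    StrictMono (Fin.snoc f a : Fin (n + 2) → α) := by
  rw [Fin.strictMono_iff_lt_succ]
  refine Fin.lastCases ?_ (fun i => ?_)
  · simpa using ha
  · rw [Fin.succ_castSucc, Fin.snoc_castSucc, Fin.snoc_castSucc]
    exact hf (Fin.castSucc_lt_succ (i := i))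

lemma StrictMono.le_card_last {β : Type*} {r : ℕ} {C : Fin (r + 1) → Finset β}
    (hC : StrictMono C) : r ≤ #(C (Fin.last r)) := by
  have hcard : StrictMono (card ∘ C) := card_strictMono.comp hC
  have hmaps : Set.MapsTo (card ∘ C) (univ : Finset (Fin (r + 1)))
      (range (#(C (Fin.last r)) + 1)) :=
    fun i _ => mem_range.2 (Nat.lt_succ_of_le (card_le_card (hC.monotone (Fin.le_last i))))
  simpa using card_le_card_of_injOn _ hmaps hcard.injective.injOn

section Chains

variable {α : Type*}

def extendTop (a : α) (σ : Σ r : ℕ, Fin (r + 1) → α) : Σ r : ℕ, Fin (r + 1) → α :=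
  ⟨σ.1 + 1, Fin.snoc σ.2 a⟩

@[simp]
lemma extendTop_fst (a : α) (σ : Σ r : ℕ, Fin (r + 1) → α) : (extendTop a σ).1 = σ.1 + 1 :=
  rfl

@[simp]
lemma extendTop_snd_last (a : α) (σ : Σ r : ℕ, Fin (r + 1) → α) :
    (extendTop a σ).2 (Fin.last (σ.1 + 1)) = a :=
  Fin.snoc_last (α := fun _ => α) a σ.2

@[simp]
lemma extendTop_snd_zero (a : α) (σ : Σ r : ℕ, Fin (r + 1) → α) :
    (extendTop a σ).2 0 = σ.2 0 :=
  Fin.snoc_castSucc (α := fun _ => α) a σ.2 0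

def dropTop : (Σ r : ℕ, Fin (r + 1) → α) → Σ r : ℕ, Fin (r + 1) → α
  | ⟨0, C⟩ => ⟨0, C⟩
  | ⟨r + 1, C⟩ => ⟨r, Fin.init C⟩

@[simp]
lemma dropTop_extendTop (a : α) (σ : Σ r : ℕ, Fin (r + 1) → α) :
    dropTop (extendTop a σ) = σ := by
  simp [extendTop, dropTop]

lemma extendTop_dropTop {r : ℕ} (C : Fin (r + 2) → α) :
    extendTop (C (Fin.last _)) (dropTop ⟨r + 1, C⟩) = ⟨r + 1, C⟩ := by
  simp [extendTop, dropTop]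

end Chains

section Weights

variable {F : Type*} [Field F] {k : ℕ} (u : Finset (Fin k) → Fin k → F)

lemma pprod_ne_zero (hne : ∀ T s, s ∈ T → u T s ≠ 0) {S T : Finset (Fin k)} (hTS : T ⊆ S) :
    pprod u S T ≠ 0 :=
  prod_ne_zero_iff.mpr fun t ht => hne S t (hTS ht)

noncomputable def chainWeight {r : ℕ} (C : Fin (r + 1) → Finset (Fin k)) : F :=
  (-1) ^ r * ∏ i : Fin r, (pprod u (C i.succ) (C i.succ \ C i.castSucc))⁻¹

lemma chainWeight_snoc {r : ℕ} (C : Fin (r + 1) → Finset (Fin k)) (A : Finset (Fin k)) :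
    chainWeight u (Fin.snoc C A : Fin (r + 2) → Finset (Fin k)) =
      -(chainWeight u C * (pprod u A (A \ C (Fin.last r)))⁻¹) := by
  simp only [chainWeight, Fin.prod_univ_castSucc, Fin.succ_castSucc, Fin.snoc_castSucc,
    Fin.succ_last, Fin.snoc_last, pow_succ]
  ring

variable (k) in
noncomputable def chainsFrom (T : Finset (Fin k)) :
    Finset (Σ r : ℕ, Fin (r + 1) → Finset (Fin k)) :=
  {σ ∈ (range (k + 1)).sigma fun _ => univ | StrictMono σ.2 ∧ σ.2 0 = T}

@[simp]
lemma mem_chainsFrom {T : Finset (Fin k)} {σ : Σ r : ℕ, Fin (r + 1) → Finset (Fin k)} :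
    σ ∈ chainsFrom k T ↔ σ.1 ≤ k ∧ StrictMono σ.2 ∧ σ.2 0 = T := by
  simp [chainsFrom]

noncomputable def chainTerm (σ : Σ r : ℕ, Fin (r + 1) → Finset (Fin k)) : F :=
  pprod u univ (σ.2 (Fin.last σ.1)) * chainWeight u σ.2

lemma Uchain_eq_sum_chainsFrom (S T : Finset (Fin k)) :
    Uchain u S T = (pprod u T T)⁻¹ *
      ∑ σ ∈ chainsFrom k T with σ.2 (Fin.last σ.1) = S, chainWeight u σ.2 := by
  rw [Uchain, chainsFrom, filter_filter, sum_filter, sum_sigma]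
  simp only [chainWeight, and_assoc]

lemma sum_pprod_mul_Uchain (T : Finset (Fin k)) :
    ∑ S ∈ univ.powerset, (if T ⊆ S then pprod u univ S * Uchain u S T else 0) =
      (pprod u T T)⁻¹ * ∑ σ ∈ chainsFrom k T, chainTerm u σ := by
  have hfiber (S : Finset (Fin k)) :
      (if T ⊆ S then pprod u univ S * Uchain u S T else 0) =
        (pprod u T T)⁻¹ * ∑ σ ∈ chainsFrom k T with σ.2 (Fin.last σ.1) = S, chainTerm u σ := by
    rw [Uchain_eq_sum_chainsFrom, mul_left_comm, mul_sum]
    split_ifs with hTS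
    · congr 1
      exact sum_congr rfl fun σ hσ => by rw [chainTerm, (mem_filter.1 hσ).2]
    · refine (mul_eq_zero_of_right _ (sum_eq_zero fun σ hσ => ?_)).symm
      simp only [mem_filter, mem_chainsFrom] at hσ
      obtain ⟨⟨-, hmono, h0⟩, htop⟩ := hσ
      exact absurd (h0 ▸ htop ▸ hmono.monotone (Fin.zero_le _)) hTS
  rw [sum_congr rfl fun S _ => hfiber S, ← mul_sum,
    sum_fiberwise_of_maps_to fun σ _ => mem_powerset.2 (subset_univ _)]

lemma chainsFrom_univ : chainsFrom k univ = {⟨0, fun _ => univ⟩} := by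
  ext ⟨r, C⟩
  simp only [mem_chainsFrom, mem_singleton]
  constructor
  · rintro ⟨-, hmono, h0⟩
    obtain _ | r := r
    · simp only [Sigma.mk.injEq, heq_eq_eq, true_and]
      exact funext fun i => by rw [Fin.fin_one_eq_zero i, h0]
    · exact absurd (h0 ▸ hmono (Fin.succ_pos 0)) (not_lt_of_ge (subset_univ _))
  · rintro ⟨⟩
    exact ⟨by omega, Subsingleton.strictMono (α := Fin 1) _, rfl⟩

lemma sum_chainTerm_chainsFrom_univ :
    ∑ σ ∈ chainsFrom k univ, chainTerm u σ = pprod u univ univ := by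
  simp [chainsFrom_univ, chainTerm, chainWeight]

lemma chainTerm_extendTop (hne : ∀ T s, s ∈ T → u T s ≠ 0)
    (σ : Σ r : ℕ, Fin (r + 1) → Finset (Fin k)) :
    chainTerm u (extendTop univ σ) = -chainTerm u σ := by
  obtain ⟨r, C⟩ := σ
  have hsplit : pprod u univ (univ \ C (Fin.last r)) * pprod u univ (C (Fin.last r)) =
      pprod u univ univ := prod_sdiff (subset_univ _)
  have hcompl := pprod_ne_zero u hne (subset_univ (univ \ C (Fin.last r)))
  simp only [chainTerm, extendTop, Fin.snoc_last, chainWeight_snoc, ← hsplit]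
  field_simp

lemma sum_chainTerm_chainsFrom_eq_zero (hne : ∀ T s, s ∈ T → u T s ≠ 0) {T : Finset (Fin k)}
    (hT : T ≠ univ) : ∑ σ ∈ chainsFrom k T, chainTerm u σ = 0 := by
  have hlength (C : Fin 1 → Finset (Fin k)) :
      ⟨0, C⟩ ∉ {σ ∈ chainsFrom k T | σ.2 (Fin.last σ.1) = univ} := by
    simp only [mem_filter, mem_chainsFrom]
    rintro ⟨⟨-, -, h0⟩, htop⟩
    exact hT (h0 ▸ htop)
  have hpair :
      ∑ σ ∈ chainsFrom k T with σ.2 (Fin.last σ.1) ≠ univ, chainTerm u (extendTop univ σ) =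
        ∑ σ ∈ chainsFrom k T with σ.2 (Fin.last σ.1) = univ, chainTerm u σ := by
    refine sum_nbij' (extendTop univ) dropTop ?_ ?_ (fun σ _ => dropTop_extendTop _ _) ?_
      (fun _ _ => rfl)
    · rintro ⟨r, C⟩ hσ
      simp only [mem_filter, mem_chainsFrom] at hσ ⊢
      obtain ⟨⟨-, hmono, h0⟩, htop⟩ := hσ
      have hlt : r < k := hmono.le_card_last.trans_lt
        (by simpa using card_lt_card (ssubset_univ_iff.2 htop))
      exact ⟨⟨hlt, hmono.finSnoc (ssubset_univ_iff.2 htop), by simpa using h0⟩, by simp⟩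
    · rintro ⟨_ | r, C⟩ hσ
      · exact absurd hσ (hlength C)
      simp only [mem_filter, mem_chainsFrom] at hσ ⊢
      obtain ⟨⟨hr, hmono, h0⟩, htop⟩ := hσ
      refine ⟨⟨by simp [dropTop]; omega, hmono.comp Fin.strictMono_castSucc, h0⟩, ?_⟩
      exact ne_of_lt (htop ▸ hmono (Fin.castSucc_lt_last (Fin.last r)))
    · rintro ⟨_ | r, C⟩ hσ
      · exact absurd hσ (hlength C)
      rw [← (mem_filter.1 hσ).2]
      exact extendTop_dropTop C
  rw [← sum_filter_not_add_sum_filter _ (fun σ => σ.2 (Fin.last σ.1) = univ), ← hpair,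
    ← sum_add_distrib]
  exact sum_eq_zero fun σ _ => by rw [chainTerm_extendTop u hne, add_neg_cancel]

end Weights

theorem stmt11_general {F : Type*} [Field F] (k : ℕ)
    (u : Finset (Fin k) → Fin k → F)
    (hne : ∀ T s, s ∈ T → u T s ≠ 0) :
    (∀ T : Finset (Fin k), T ⊂ Finset.univ →
        ∑ S ∈ Finset.univ.powerset,
          (if T ⊆ S then pprod u Finset.univ S * Uchain u S T else 0) = 0) ∧
      ∑ S ∈ (Finset.univ : Finset (Fin k)).powerset,
          (if (Finset.univ : Finset (Fin k)) ⊆ S then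
            pprod u Finset.univ S * Uchain u S Finset.univ else 0) = 1 := by
  refine ⟨fun T hT => ?_, ?_⟩
  · rw [sum_pprod_mul_Uchain, sum_chainTerm_chainsFrom_eq_zero u hne (ssubset_univ_iff.1 hT),
      mul_zero]
  · rw [sum_pprod_mul_Uchain, sum_chainTerm_chainsFrom_univ,
      inv_mul_cancel₀ (pprod_ne_zero u hne subset_rfl)]

/-- with `u_{T,s} = 0` for `s ∉ T` and `u_{T,s} ≠ 0` for `s ∈ T`, for any
`T ⊊ [k]` we have `∑_{T ⊆ S ⊆ [k]} p_{[k],S} U_{S,T} = 0`, while for `T = [k]` the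
corresponding sum equals `1`. -/
theorem stmt11 {F : Type*} [Field F] (k : ℕ) (hk : 1 ≤ k)
    (u : Finset (Fin k) → Fin k → F)
    (hzero : ∀ T s, s ∉ T → u T s = 0)
    (hne : ∀ T s, s ∈ T → u T s ≠ 0) :
    (∀ T : Finset (Fin k), T ⊂ Finset.univ →
        ∑ S ∈ Finset.univ.powerset,
          (if T ⊆ S then pprod u Finset.univ S * Uchain u S T else 0) = 0) ∧
      ∑ S ∈ (Finset.univ : Finset (Fin k)).powerset,
          (if (Finset.univ : Finset (Fin k)) ⊆ S then
            pprod u Finset.univ S * Uchain u S Finset.univ else 0) = 1 :=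
  stmt11_general k u hne
end

section
/- Let $L$ be a pointed full-dimensional cone in $\mathbb{R}^n$ subdivided into full-dimensional cones $L_1,\dots,L_t$ forming a fan, let $\lambda$ be a cone of the fan, and let $U = \mathrm{span}(\lambda)$. Then the images $\overline{L_i}$ in $\mathbb{R}^n/U$, for those $i$ with $\lambda$ a face of $L_i$, cover the image $\overline{L}$: that is, for every $w \in L$ there exists $i$ with $\lambda$ a face of $L_i$ and $\overline{w} \in \overline{L_i}$. -/
/-!
Say `λ` is cut out of `L_{i₀}` by `y₀`, and let `ρ` be the sum of the generators of `L_{i₀}` on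
which `y₀` vanishes; every face of `L_{i₀}` containing `ρ` then contains `λ`. For `w ∈ L` the
points `w + sρ` lie in `L`, so for arbitrarily large `s` they lie in one and the same `L_i`, and
since polyhedral cones are closed (conic Carathéodory), `ρ = lim (w + sρ)/s ∈ L_i`. So
`L_{i₀} ∩ L_i` is a face of `L_{i₀}` containing `ρ`, hence `λ`; thus `λ` is a face of the face
`L_i ∩ L_{i₀}` of `L_i`, hence of `L_i`. Finally `w + sρ ∈ L_i` has the same image as `w` modulo
`U ∋ ρ`.
-/

open scoped RealInnerProductSpace

variable {E : Type*} [NormedAddCommGroup E] [InnerProductSpace ℝ E]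

/-- A (finitely generated, i.e. polyhedral) cone. -/
def IsPolyhedralCone (C : Set E) : Prop :=
  ∃ (k : ℕ) (v : Fin k → E),
    C = {x | ∃ c : Fin k → ℝ, (∀ i, 0 ≤ c i) ∧ x = ∑ i, c i • v i}

/-- `F` is a face of the cone `C`: cut out of `C` by a supporting linear functional. -/
def IsFaceOf (F C : Set E) : Prop :=
  ∃ y : E, (∀ x ∈ C, 0 ≤ ⟪y, x⟫) ∧ F = {x ∈ C | ⟪y, x⟫ = 0}

open Filter Topology

section ConicHull

variable (𝕜 : Type*) {V ι : Type*} [Field 𝕜] [LinearOrder 𝕜] [IsStrictOrderedRing 𝕜]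
  [AddCommGroup V] [Module 𝕜 V]

/-- `IsPolyhedralCone C` unfolds to `∃ k (v : Fin k → E), C = conicHull ℝ v`. -/
def conicHull [Fintype ι] (v : ι → V) : Set V :=
  {x | ∃ c : ι → 𝕜, (∀ i, 0 ≤ c i) ∧ x = ∑ i, c i • v i}

theorem mem_conicHull_self [Fintype ι] [DecidableEq ι] (v : ι → V) (i : ι) :
    v i ∈ conicHull 𝕜 v :=
  ⟨Pi.single i 1, fun j => by by_cases h : j = i <;> simp [h], by simp [Pi.single_apply]⟩

variable {𝕜}

theorem exists_sum_erase_eq_of_not_linearIndepOn [DecidableEq ι] {v : ι → V} {s : Finset ι}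
    {c : ι → 𝕜} (hc : ∀ i ∈ s, 0 ≤ c i) (hs : ¬LinearIndepOn 𝕜 v s) :
    ∃ j ∈ s, ∃ c' : ι → 𝕜, (∀ i ∈ s.erase j, 0 ≤ c' i) ∧
      ∑ i ∈ s.erase j, c' i • v i = ∑ i ∈ s, c i • v i := by
  obtain ⟨g, hg, i₀, hi₀, hgi₀⟩ : ∃ g : ι → 𝕜, ∑ i ∈ s, g i • v i = 0 ∧ ∃ i ∈ s, 0 < g i := by
    obtain ⟨f, hf, i, hi, hfi⟩ := not_linearIndepOn_finset_iff.1 hs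
    rcases hfi.lt_or_gt with hneg | hpos
    · exact ⟨-f, by simp [hf], i, hi, neg_pos.2 hneg⟩
    · exact ⟨f, hf, i, hi, hpos⟩
  -- Subtract the largest multiple of the relation `g` that keeps all coefficients nonnegative.
  obtain ⟨j, hj, hjmin⟩ := (s.filter (0 < g ·)).exists_min_image (fun i => c i / g i)
    ⟨i₀, Finset.mem_filter.2 ⟨hi₀, hgi₀⟩⟩
  rw [Finset.mem_filter] at hj
  set r := c j / g j
  have hr : 0 ≤ r := div_nonneg (hc j hj.1) hj.2.le
  refine ⟨j, hj.1, fun i => c i - r * g i, fun i hi => ?_, ?_⟩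
  · have hi := Finset.mem_of_mem_erase hi
    rcases lt_or_ge 0 (g i) with hgi | hgi
    · have := (le_div_iff₀ hgi).1 (hjmin i (Finset.mem_filter.2 ⟨hi, hgi⟩))
      linarith
    · nlinarith [hc i hi]
  · have hcj : c j - r * g j = 0 := by rw [div_mul_cancel₀ _ hj.2.ne', sub_self]
    rw [Finset.sum_erase _ (by beta_reduce; rw [hcj, zero_smul])]
    simp only [sub_smul, Finset.sum_sub_distrib, mul_smul, ← Finset.smul_sum, hg, smul_zero,
      sub_zero]

theorem exists_linearIndepOn_sum_eq [DecidableEq ι] (v : ι → V) (s : Finset ι) {c : ι → 𝕜}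
    (hc : ∀ i ∈ s, 0 ≤ c i) :
    ∃ t ⊆ s, LinearIndepOn 𝕜 v t ∧
      ∃ c' : ι → 𝕜, (∀ i ∈ t, 0 ≤ c' i) ∧ ∑ i ∈ t, c' i • v i = ∑ i ∈ s, c i • v i := by
  induction s using Finset.strongInduction generalizing c with
  | H s ih =>
    by_cases hs : LinearIndepOn 𝕜 v s
    · exact ⟨s, subset_rfl, hs, c, hc, rfl⟩
    obtain ⟨j, hj, c', hc', hsum⟩ := exists_sum_erase_eq_of_not_linearIndepOn hc hs
    obtain ⟨t, hts, ht, c'', hc'', hsum'⟩ := ih _ (Finset.erase_ssubset hj) hc'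
    exact ⟨t, hts.trans (Finset.erase_subset j s), ht, c'', hc'', hsum'.trans hsum⟩

theorem conicHull_eq_iUnion_linearIndepOn [Fintype ι] (v : ι → V) :
    conicHull 𝕜 v = ⋃ (t : Finset ι) (_ : LinearIndepOn 𝕜 v t),
      Fintype.linearCombination 𝕜 (fun i : t => v i) '' Set.univ.pi fun _ => Set.Ici 0 := by
  classical
  ext x
  simp only [conicHull, Set.mem_ofPred_eq, Set.mem_iUnion, Set.mem_image, Set.mem_univ_pi,
    Set.mem_Ici, Fintype.linearCombination_apply]
  constructor
  · rintro ⟨c, hc, rfl⟩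
    obtain ⟨t, -, ht, c', hc', hsum⟩ :=
      exists_linearIndepOn_sum_eq v Finset.univ (fun i _ => hc i)
    refine ⟨t, ht, fun i => c' i, fun i => hc' i i.2, ?_⟩
    rw [Finset.sum_coe_sort t (fun i => c' i • v i), hsum]
  · rintro ⟨t, -, d, hd, rfl⟩
    refine ⟨fun i => if h : i ∈ t then d ⟨i, h⟩ else 0, fun i => ?_, ?_⟩
    · beta_reduce; split_ifs <;> simp [hd]
    · symm
      calc ∑ i, (if h : i ∈ t then d ⟨i, h⟩ else 0) • v i
          = ∑ i ∈ t, (if h : i ∈ t then d ⟨i, h⟩ else 0) • v i :=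
            (Finset.sum_subset t.subset_univ fun i _ hi => by simp [hi]).symm
        _ = ∑ i : t, d i • v i := by rw [← Finset.sum_coe_sort]; simp

end ConicHull

theorem isClosed_conicHull {V ι : Type*} [AddCommGroup V] [Module ℝ V] [TopologicalSpace V]
    [IsTopologicalAddGroup V] [ContinuousSMul ℝ V] [T2Space V] [Fintype ι] (v : ι → V) :
    IsClosed (conicHull ℝ v) := by
  rw [conicHull_eq_iUnion_linearIndepOn]
  refine isClosed_iUnion_of_finite fun t => isClosed_iUnion_of_finite fun ht => ?_
  have hinj := ht.linearIndependent.fintypeLinearCombination_injective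
  exact (LinearMap.isClosedEmbedding_of_injective (LinearMap.ker_eq_bot.2 hinj)).isClosedMap _
    (isClosed_set_pi fun _ _ => isClosed_Ici)

section Inner

variable {ι : Type*} [Fintype ι] {v : ι → E} {c : ι → ℝ} {y : E}

theorem inner_sum_smul (y : E) (c : ι → ℝ) (v : ι → E) :
    ⟪y, ∑ i, c i • v i⟫ = ∑ i, c i * ⟪y, v i⟫ := by
  simp only [inner_sum, real_inner_smul_right]

theorem inner_nonneg_of_mem_conicHull (hy : ∀ i, 0 ≤ ⟪y, v i⟫) {x : E}
    (hx : x ∈ conicHull ℝ v) : 0 ≤ ⟪y, x⟫ := by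
  obtain ⟨c, hc, rfl⟩ := hx
  rw [inner_sum_smul]
  exact Finset.sum_nonneg fun i _ => mul_nonneg (hc i) (hy i)

theorem eq_zero_or_inner_eq_zero_of_inner_sum_smul_eq_zero (hc : ∀ i, 0 ≤ c i)
    (hy : ∀ i, 0 ≤ ⟪y, v i⟫) (h : ⟪y, ∑ i, c i • v i⟫ = 0) (i : ι) : c i = 0 ∨ ⟪y, v i⟫ = 0 := by
  rw [inner_sum_smul, Finset.sum_eq_zero_iff_of_nonneg fun i _ => mul_nonneg (hc i) (hy i)] at h
  exact mul_eq_zero.1 (h i (Finset.mem_univ i))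

theorem inner_sum_smul_eq_zero (h : ∀ i, c i = 0 ∨ ⟪y, v i⟫ = 0) : ⟪y, ∑ i, c i • v i⟫ = 0 := by
  rw [inner_sum_smul]
  exact Finset.sum_eq_zero fun i _ => mul_eq_zero.2 (h i)

end Inner

namespace IsPolyhedralCone

variable {C : Set E}

theorem add_mem (hC : IsPolyhedralCone C) {x y : E} (hx : x ∈ C) (hy : y ∈ C) : x + y ∈ C := by
  obtain ⟨k, v, rfl⟩ := hC
  obtain ⟨c, hc, rfl⟩ := hx
  obtain ⟨d, hd, rfl⟩ := hy
  exact ⟨c + d, fun i => add_nonneg (hc i) (hd i), by simp [add_smul, Finset.sum_add_distrib]⟩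

theorem smul_mem (hC : IsPolyhedralCone C) {a : ℝ} (ha : 0 ≤ a) {x : E} (hx : x ∈ C) :
    a • x ∈ C := by
  obtain ⟨k, v, rfl⟩ := hC
  obtain ⟨c, hc, rfl⟩ := hx
  exact ⟨a • c, fun i => mul_nonneg ha (hc i), by simp [Finset.smul_sum, smul_smul]⟩

theorem isClosed (hC : IsPolyhedralCone C) : IsClosed C := by
  obtain ⟨k, v, rfl⟩ := hC
  exact isClosed_conicHull v

end IsPolyhedralCone

namespace IsFaceOf

variable {F G C : Set E}

theorem subset (h : IsFaceOf F C) : F ⊆ C := by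
  obtain ⟨y, -, rfl⟩ := h
  exact Set.sep_subset C _

theorem of_subset_of_subset (h : IsFaceOf F C) (hFG : F ⊆ G) (hGC : G ⊆ C) : IsFaceOf F G := by
  obtain ⟨y, hy, rfl⟩ := h
  exact ⟨y, fun x hx => hy x (hGC hx), by
    ext x; exact ⟨fun hx => ⟨hFG hx, hx.2⟩, fun hx => ⟨hGC hx.1, hx.2⟩⟩⟩

theorem exists_mem_forall_subset (hC : IsPolyhedralCone C) (hF : IsFaceOf F C) :
    ∃ ρ ∈ F, ∀ G, IsFaceOf G C → ρ ∈ G → F ⊆ G := by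
  obtain ⟨k, v, rfl⟩ := hC
  obtain ⟨y₀, hy₀, rfl⟩ := hF
  have hv := mem_conicHull_self ℝ v
  -- `ρ` is the sum of the generators lying on `F`, a point of the relative interior of `F`.
  set a : Fin k → ℝ := fun i => if ⟪y₀, v i⟫ = 0 then 1 else 0
  have ha : ∀ i, 0 ≤ a i := fun i => by by_cases h : ⟪y₀, v i⟫ = 0 <;> simp [a, h]
  refine ⟨∑ i, a i • v i, ⟨⟨a, ha, rfl⟩, inner_sum_smul_eq_zero fun i => ?_⟩, ?_⟩
  · by_cases h : ⟪y₀, v i⟫ = 0 <;> simp [a, h]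
  rintro G ⟨y, hy, rfl⟩ ⟨-, hρ⟩ x ⟨⟨c, hc, rfl⟩, hx⟩
  have hyv : ∀ i, ⟪y₀, v i⟫ = 0 → ⟪y, v i⟫ = 0 := fun i hi =>
    (eq_zero_or_inner_eq_zero_of_inner_sum_smul_eq_zero ha (fun j => hy _ (hv j)) hρ i).resolve_left
      (by simp [a, hi])
  exact ⟨⟨c, hc, rfl⟩, inner_sum_smul_eq_zero fun i =>
    (eq_zero_or_inner_eq_zero_of_inner_sum_smul_eq_zero hc (fun j => hy₀ _ (hv j)) hx i).imp_right
      (hyv i)⟩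

theorem trans (hFG : IsFaceOf F G) (hGC : IsFaceOf G C) (hC : IsPolyhedralCone C) :
    IsFaceOf F C := by
  obtain ⟨k, v, rfl⟩ := hC
  obtain ⟨y₁, hy₁, rfl⟩ := hGC
  obtain ⟨y₀, hy₀, rfl⟩ := hFG
  have hv := mem_conicHull_self ℝ v
  -- `y₁ + ε • y₀` cuts out `F` from `C` for small `ε > 0`: on generators outside `G` the positive
  -- term `⟪y₁, v i⟫` dominates, and on generators in `G` both terms are nonnegative.
  obtain ⟨ε, hε, hεv⟩ :
      ∃ ε : ℝ, 0 < ε ∧ ∀ i, 0 < ⟪y₁, v i⟫ → 0 < ⟪y₁, v i⟫ + ε * ⟪y₀, v i⟫ := by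
    have hsmall : ∀ᶠ ε in 𝓝 (0 : ℝ), ∀ i, 0 < ⟪y₁, v i⟫ → 0 < ⟪y₁, v i⟫ + ε * ⟪y₀, v i⟫ := by
      refine eventually_all.2 fun i => ?_
      by_cases hi : 0 < ⟪y₁, v i⟫
      · have hcont : Continuous fun ε : ℝ => ⟪y₁, v i⟫ + ε * ⟪y₀, v i⟫ := by fun_prop
        exact (hcont.continuousAt.eventually (lt_mem_nhds (by simpa using hi))).mono
          fun _ h _ => h
      · exact Eventually.of_forall fun _ h => absurd h hi
    obtain ⟨ε, hεv, hε⟩ :=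
      ((hsmall.filter_mono nhdsWithin_le_nhds).and
      (self_mem_nhdsWithin : ∀ᶠ ε in 𝓝[>] (0 : ℝ), 0 < ε)).exists
    exact ⟨ε, hε, hεv⟩
  set y := y₁ + ε • y₀
  have hyx : ∀ x, ⟪y, x⟫ = ⟪y₁, x⟫ + ε * ⟪y₀, x⟫ := fun x => by
    rw [inner_add_left, real_inner_smul_left]
  have hyv : ∀ i, 0 ≤ ⟪y, v i⟫ ∧ (⟪y, v i⟫ = 0 → ⟪y₁, v i⟫ = 0 ∧ ⟪y₀, v i⟫ = 0) := by
    intro i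
    rw [hyx]
    rcases (hy₁ _ (hv i)).lt_or_eq with h | h
    · exact ⟨(hεv i h).le, fun h' => absurd h' (hεv i h).ne'⟩
    · have h₀ : 0 ≤ ⟪y₀, v i⟫ := hy₀ _ ⟨hv i, h.symm⟩
      exact ⟨by linarith [mul_nonneg hε.le h₀],
        fun h' => ⟨h.symm, (mul_eq_zero.1 (by linarith)).resolve_left hε.ne'⟩⟩
  refine ⟨y, fun x hx => inner_nonneg_of_mem_conicHull (fun i => (hyv i).1) hx, ?_⟩
  ext x
  constructor
  · rintro ⟨⟨hxC, hx₁⟩, hx₀⟩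
    exact ⟨hxC, by rw [hyx, hx₁, hx₀, mul_zero, add_zero]⟩
  · rintro ⟨⟨c, hc, rfl⟩, hx⟩
    have hz := fun i => (eq_zero_or_inner_eq_zero_of_inner_sum_smul_eq_zero hc
      (fun j => (hyv j).1) hx i).imp_right (hyv i).2
    exact ⟨⟨⟨c, hc, rfl⟩, inner_sum_smul_eq_zero fun i => (hz i).imp_right And.left⟩,
      inner_sum_smul_eq_zero fun i => (hz i).imp_right And.right⟩

end IsFaceOf

theorem exists_mem_and_add_smul_mem {ι : Type*} [Finite ι] {L : Set E} {Ls : ι → Set E}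
    (hL : IsPolyhedralCone L) (hLs : ∀ i, IsPolyhedralCone (Ls i)) (hunion : ⋃ i, Ls i = L)
    {w ρ : E} (hw : w ∈ L) (hρ : ρ ∈ L) : ∃ i, ρ ∈ Ls i ∧ ∃ s : ℝ, w + s • ρ ∈ Ls i := by
  have hfreq : ∃ᶠ s : ℝ in atTop, ∃ i, s⁻¹ • w + ρ ∈ Ls i := by
    refine (eventually_gt_atTop 0).frequently.mono fun s hs => Set.mem_iUnion.1 ?_
    rw [hunion]
    exact hL.add_mem (hL.smul_mem (inv_nonneg.2 hs.le) hw) hρ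
  obtain ⟨i, hi⟩ := frequently_exists.1 hfreq
  have hlim : Tendsto (fun s : ℝ => s⁻¹ • w + ρ) atTop (𝓝 ρ) := by
    simpa using ((tendsto_inv_atTop_zero (𝕜 := ℝ)).smul_const w).add_const ρ
  refine ⟨i, (hLs i).isClosed.mem_of_frequently_of_tendsto hi hlim, ?_⟩
  obtain ⟨s, hsi, hs⟩ := (hi.and_eventually (eventually_gt_atTop 0)).exists
  refine ⟨s, ?_⟩
  simpa [smul_add, smul_smul, hs.ne'] using (hLs i).smul_mem hs.le hsi

theorem stmt15_general (n t : ℕ)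
    (L : Set (EuclideanSpace ℝ (Fin n))) (hL : IsPolyhedralCone L)
    (Ls : Fin t → Set (EuclideanSpace ℝ (Fin n)))
    (hLs : ∀ i, IsPolyhedralCone (Ls i))
    (hunion : (⋃ i, Ls i) = L)
    (hfan : ∀ i j, IsFaceOf (Ls i ∩ Ls j) (Ls i))
    (lam : Set (EuclideanSpace ℝ (Fin n))) (hlam : ∃ i₀, IsFaceOf lam (Ls i₀))
    (U : Submodule ℝ (EuclideanSpace ℝ (Fin n))) (hU : U = Submodule.span ℝ lam) :
    ∀ w ∈ L, ∃ i, IsFaceOf lam (Ls i) ∧ U.mkQ w ∈ U.mkQ '' Ls i := by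
  intro w hw
  obtain ⟨i₀, hlam⟩ := hlam
  obtain ⟨ρ, hρlam, hρmin⟩ := hlam.exists_mem_forall_subset (hLs i₀)
  have hρL : ρ ∈ L := hunion ▸ Set.mem_iUnion_of_mem i₀ (hlam.subset hρlam)
  obtain ⟨i, hρi, s, hwi⟩ := exists_mem_and_add_smul_mem hL hLs hunion hw hρL
  have hsub : lam ⊆ Ls i ∩ Ls i₀ :=
    Set.inter_comm (Ls i₀) (Ls i) ▸ hρmin _ (hfan i₀ i) ⟨hlam.subset hρlam, hρi⟩
  refine ⟨i, (hlam.of_subset_of_subset hsub Set.inter_subset_right).trans (hfan i i₀) (hLs i),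
    w + s • ρ, hwi, ?_⟩
  have hρU : ρ ∈ U := hU ▸ Submodule.subset_span hρlam
  simp [(Submodule.Quotient.mk_eq_zero U).2 hρU]

/-- if a pointed full-dimensional cone `L` is subdivided by the
full-dimensional cones `L₁,…,L_t` of a fan and `λ` is a cone of the fan, with
`U = span λ`, then the images of those `Lᵢ` having `λ` as a face cover the image of `L`
in the quotient `E/U`: every `w ∈ L` has `w̄ ∈ L̄ᵢ` for some `i` with `λ` a face of `Lᵢ`. -/
theorem stmt15 (n t : ℕ)
    (L : Set (EuclideanSpace ℝ (Fin n))) (hL : IsPolyhedralCone L)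
    (hpointed : L ∩ (-L) ⊆ {0}) (hfull : Submodule.span ℝ L = ⊤)
    (Ls : Fin t → Set (EuclideanSpace ℝ (Fin n)))
    (hLs : ∀ i, IsPolyhedralCone (Ls i))
    (hLsfull : ∀ i, Submodule.span ℝ (Ls i) = ⊤)
    (hunion : (⋃ i, Ls i) = L)
    (hfan : ∀ i j, IsFaceOf (Ls i ∩ Ls j) (Ls i))
    (lam : Set (EuclideanSpace ℝ (Fin n))) (hlam : ∃ i₀, IsFaceOf lam (Ls i₀))
    (U : Submodule ℝ (EuclideanSpace ℝ (Fin n))) (hU : U = Submodule.span ℝ lam) :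
    ∀ w ∈ L, ∃ i, IsFaceOf lam (Ls i) ∧ U.mkQ w ∈ U.mkQ '' Ls i :=
  stmt15_general n t L hL Ls hLs hunion hfan lam hlam U hU
end

section
/- Let $w_1, w_2$ span $\mathbb{R}^2$, let $K = \mathrm{Cone}(w_1, w_2)$, and subdivide $K$ by the ray through $w_1 + w_2$ into $L_1 = \mathrm{Cone}(w_1, w_1+w_2)$ and $L_2 = \mathrm{Cone}(w_1+w_2, w_2)$. Then, with dual cones computed with respect to the dual basis $v_1, v_2$, we have $K^\vee = \mathrm{Cone}(v_1,v_2)$, $L_1^\vee = \mathrm{Cone}(v_1 - v_2, v_2)$, $L_2^\vee = \mathrm{Cone}(v_1, v_2 - v_1)$, and the indicator functions satisfy $\mathbf{1}[\mathrm{Cone}(v_1-v_2)] + \mathbf{1}[\mathrm{Cone}(v_2-v_1)] = \mathbf{1}[\mathbb{R}(v_1 - v_2)] + \mathbf{1}[\{0\}]$. -/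
/-- The cone generated by two vectors. -/
def cone2 {W : Type*} [AddCommGroup W] [Module ℝ W] (x y : W) : Set W :=
  {z | ∃ c₁ c₂ : ℝ, 0 ≤ c₁ ∧ 0 ≤ c₂ ∧ z = c₁ • x + c₂ • y}

/-- The ray generated by a vector. -/
def ray {W : Type*} [AddCommGroup W] [Module ℝ W] (x : W) : Set W :=
  {z | ∃ c : ℝ, 0 ≤ c ∧ z = c • x}

/-- The dual cone, inside the dual space. -/
def dualConeOf {W : Type*} [AddCommGroup W] [Module ℝ W] (C : Set W) :
    Set (Module.Dual ℝ W) :=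
  {v | ∀ w ∈ C, 0 ≤ v w}

lemma dualConeOf_cone2 {W : Type*} [AddCommGroup W] [Module ℝ W] (x y : W) :
    dualConeOf (cone2 x y) = {v : Module.Dual ℝ W | 0 ≤ v x ∧ 0 ≤ v y} := by
  ext v
  constructor
  · intro h
    exact ⟨by simpa using h x ⟨1, 0, by norm_num⟩, by simpa using h y ⟨0, 1, by norm_num⟩⟩
  · rintro ⟨hx, hy⟩ w ⟨c₁, c₂, h₁, h₂, rfl⟩
    simp only [map_add, map_smul, smul_eq_mul]
    positivity

lemma mem_ray {W : Type*} [AddCommGroup W] [Module ℝ W] {x z : W} :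
    z ∈ ray x ↔ ∃ c : ℝ, 0 ≤ c ∧ z = c • x := Iff.rfl

lemma dual_expand {W : Type*} [AddCommGroup W] [Module ℝ W] [FiniteDimensional ℝ W]
    (bW : Module.Basis (Fin 2) ℝ W) (v : Module.Dual ℝ W) :
    v = v (bW 0) • bW.dualBasis 0 + v (bW 1) • bW.dualBasis 1 := by
  refine bW.ext fun i => ?_
  fin_cases i <;> simp [Module.Basis.dualBasis_apply_self]

/-- subdividing `K = Cone(w₁,w₂)` by the ray through `w₁+w₂` into
`L₁ = Cone(w₁, w₁+w₂)` and `L₂ = Cone(w₁+w₂, w₂)`, the dual cones (w.r.t. the dual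
basis `v₁, v₂`) are `K^∨ = Cone(v₁,v₂)`, `L₁^∨ = Cone(v₁-v₂, v₂)`,
`L₂^∨ = Cone(v₁, v₂-v₁)`, and the indicator identity
`𝟙[Cone(v₁-v₂)] + 𝟙[Cone(v₂-v₁)] = 𝟙[ℝ(v₁-v₂)] + 𝟙[{0}]` holds. -/
theorem stmt18 (W : Type*) [AddCommGroup W] [Module ℝ W] [FiniteDimensional ℝ W]
    (bW : Module.Basis (Fin 2) ℝ W) :
    dualConeOf (cone2 (bW 0) (bW 1)) = cone2 (bW.dualBasis 0) (bW.dualBasis 1) ∧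
    dualConeOf (cone2 (bW 0) (bW 0 + bW 1)) =
      cone2 (bW.dualBasis 0 - bW.dualBasis 1) (bW.dualBasis 1) ∧
    dualConeOf (cone2 (bW 0 + bW 1) (bW 1)) =
      cone2 (bW.dualBasis 0) (bW.dualBasis 1 - bW.dualBasis 0) ∧
    (Set.indicator (ray (bW.dualBasis 0 - bW.dualBasis 1)) (fun _ => (1 : ℝ)) +
        Set.indicator (ray (bW.dualBasis 1 - bW.dualBasis 0)) fun _ => (1 : ℝ)) =
      (Set.indicator {z | ∃ c : ℝ, z = c • (bW.dualBasis 0 - bW.dualBasis 1)}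
          (fun _ => (1 : ℝ)) +
        Set.indicator {(0 : Module.Dual ℝ W)} fun _ => (1 : ℝ)) := by
  have hdb : ∀ i j : Fin 2, bW.dualBasis i (bW j) = if j = i then 1 else 0 :=
    fun i j => Module.Basis.dualBasis_apply_self bW i j
  refine ⟨?_, ?_, ?_, ?_⟩
  · rw [dualConeOf_cone2]
    ext v
    constructor
    · rintro ⟨hx, hy⟩
      exact ⟨v (bW 0), v (bW 1), hx, hy, dual_expand bW v⟩
    · rintro ⟨c₁, c₂, h₁, h₂, rfl⟩
      constructor <;> simp [hdb] <;> assumption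
  · rw [dualConeOf_cone2]
    ext v
    constructor
    · rintro ⟨hx, hy⟩
      refine ⟨v (bW 0), v (bW 0) + v (bW 1), hx, by simpa using hy, ?_⟩
      conv_lhs => rw [dual_expand bW v]
      module
    · rintro ⟨c₁, c₂, h₁, h₂, rfl⟩
      constructor <;> simp [hdb] <;> linarith
  · rw [dualConeOf_cone2]
    ext v
    constructor
    · rintro ⟨hx, hy⟩
      refine ⟨v (bW 0) + v (bW 1), v (bW 1), by simpa using hx, hy, ?_⟩
      conv_lhs => rw [dual_expand bW v]
      module
    · rintro ⟨c₁, c₂, h₁, h₂, rfl⟩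
      constructor <;> simp [hdb] <;> linarith
  · set u := bW.dualBasis 0 - bW.dualBasis 1 with hu
    have hu0 : u ≠ 0 := by
      intro h
      have := congrArg (fun v : Module.Dual ℝ W => v (bW 0)) h
      simp [hu, hdb] at this
    have hneg : bW.dualBasis 1 - bW.dualBasis 0 = -u := by rw [hu]; abel
    funext z
    simp only [Pi.add_apply, hneg]
    by_cases h1 : z ∈ ray u
    · obtain ⟨c, hc, rfl⟩ := h1
      by_cases h2 : c • u ∈ ray (-u)
      · obtain ⟨d, hd, he⟩ := h2
        have : (c + d) • u = 0 := by
          rw [add_smul, he]; simp [smul_neg]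
        have hcd : c + d = 0 := by
          by_contra h
          exact hu0 (by simpa [h] using smul_eq_zero.mp this)
        have hc0 : c = 0 := le_antisymm (by linarith) hc
        subst hc0
        rw [Set.indicator_of_mem (mem_ray.mpr ⟨0, le_refl 0, by simp⟩),
          Set.indicator_of_mem (mem_ray.mpr ⟨0, le_refl 0, by simp⟩),
          Set.indicator_of_mem (by exact ⟨0, by simp⟩),
          Set.indicator_of_mem (by simp)]
      · have hz0 : c • u ≠ 0 := by
          intro h
          exact h2 (by rw [h]; exact mem_ray.mpr ⟨0, le_refl 0, by simp⟩)
        rw [Set.indicator_of_mem (mem_ray.mpr ⟨c, hc, rfl⟩),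
          Set.indicator_of_notMem h2,
          Set.indicator_of_mem (Set.mem_setOf_eq ▸ (⟨c, rfl⟩ : ∃ c' : ℝ, c • u = c' • u)),
          Set.indicator_of_notMem (by simpa using hz0)]
    · by_cases h2 : z ∈ ray (-u)
      · obtain ⟨d, hd, rfl⟩ := h2
        have hz0 : d • (-u) ≠ 0 := by
          intro h
          exact h1 (by rw [h]; exact mem_ray.mpr ⟨0, le_refl 0, by simp⟩)
        rw [Set.indicator_of_notMem h1,
          Set.indicator_of_mem (mem_ray.mpr ⟨d, hd, rfl⟩),
          Set.indicator_of_mem (Set.mem_setOf_eq ▸ (⟨-d, by module⟩ : ∃ c' : ℝ, d • -u = c' • u)),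
          Set.indicator_of_notMem (by simpa using hz0)]
        norm_num
      · have hline : z ∉ {z : Module.Dual ℝ W | ∃ c : ℝ, z = c • u} := by
          rintro ⟨c, rfl⟩
          rcases le_or_gt 0 c with h | h
          · exact h1 (mem_ray.mpr ⟨c, h, rfl⟩)
          · exact h2 (mem_ray.mpr ⟨-c, by linarith, by simp [smul_neg]⟩)
        have hz0 : z ≠ 0 := by
          intro h
          exact h1 (by rw [h]; exact mem_ray.mpr ⟨0, le_refl 0, by simp⟩)
        rw [Set.indicator_of_notMem h1, Set.indicator_of_notMem h2,
          Set.indicator_of_notMem hline,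
          Set.indicator_of_notMem (by simpa using hz0)]
end
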